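/- Let M be a bi-relational model whose accessibility relation R is symmetric. Then both ◇□A ⊃ A and A ⊃ □◇A are valid on M, for every formula A. -/
import Mathlib


inductive Fml : Type where
  | atom : ℕ → Fml
  | bot : Fml
  | or : Fml → Fml → Fml
  | and : Fml → Fml → Fml
  | imp : Fml → Fml → Fml
  | dia : Fml → Fml
  | box : Fml → Fml

structure BiModel where
  W : Type
  ne : Nonempty W
  le : W → W → Prop
  R : W → W → Prop
  V : W → ℕ → Prop
  le_refl : ∀ w, le w w
  le_trans : ∀ w u v, le w u → le u v → le w v
  F1 : ∀ w v v', R w v → le v v' → ∃ w', le w w' ∧ R w' v'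
  F2 : ∀ w w' v, le w w' → R w v → ∃ v', R w' v' ∧ le v v'
  mono : ∀ w u p, le w u → V w p → V u p

def sat (M : BiModel) : M.W → Fml → Prop
  | w, .atom p => M.V w p
  | _, .bot => False
  | w, .or A B => sat M w A ∨ sat M w B
  | w, .and A B => sat M w A ∧ sat M w B
  | w, .imp A B => ∀ w', M.le w w' → sat M w' A → sat M w' B
  | w, .dia A => ∃ v, M.R w v ∧ sat M v A
  | w, .box A => ∀ w' v', M.le w w' → M.R w' v' → sat M v' A

theorem sat_mono (M : BiModel) (A : Fml) : ∀ w u : M.W, M.le w u → sat M w A → sat M u A := by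
  induction A with
  | atom p => intro w u h hs; exact M.mono w u p h hs
  | bot => intro w u h hs; exact hs
  | or A B ihA ihB => intro w u h hs
                      cases hs with
                      | inl hA => exact Or.inl (ihA w u h hA)
                      | inr hB => exact Or.inr (ihB w u h hB)
  | and A B ihA ihB => intro w u h hs; exact ⟨ihA w u h hs.1, ihB w u h hs.2⟩
  | imp A B _ _ => intro w u h hs w' hw' hA; exact hs w' (M.le_trans w u w' h hw') hA
  | dia A ihA => intro w u h hs
                 obtain ⟨v, hR, hv⟩ := hs
                 obtain ⟨v', hR', hle⟩ := M.F2 w u v h hR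
                 exact ⟨v', hR', ihA v v' hle hv⟩
  | box A _ => intro w u h hs w' v' hw' hR'
               exact hs w' v' (M.le_trans w u w' h hw') hR'

theorem symmetric_axioms_valid (M : BiModel)
    (hsym : ∀ w u : M.W, M.R w u → M.R u w)
    (A : Fml) (w : M.W) :
    sat M w (.imp (.dia (.box A)) A) ∧
    sat M w (.imp A (.box (.dia A))) := by
  constructor
  · intro w' hle hdia
    obtain ⟨v, hR, hbox⟩ := hdia
    exact hbox v w' (M.le_refl v) (hsym w' v hR)
  · intro w' hle hA u v hle' hR
    exact ⟨u, hsym u v hR, sat_mono M A w' u hle' hA⟩
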